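/- For every v ∈ P there exists a common solution, i.e., an ω ∈ Γ that simultaneously attains max_{ω'∈Γ} g̃_v(ω') and attains max_{ω'∈Γ} g̃_v^{(j)}(ω') for every j ∈ {1,…,L}. (Equation (32) of the paper.) -/

import Mathlib

open Finset
open scoped Classical

namespace HetTS

noncomputable section

variable {K M : ℕ}

/-- Number of clients having access to arm `i`. -/
def Mi (S : Fin M → Finset (Fin K)) (i : Fin K) : ℕ :=
  (Finset.univ.filter fun m => i ∈ S m).card

/-- The mean reward `μ_i(v)` of arm `i`: average of the means of arm `i` across the clients
having access to it. -/
def armMean (S : Fin M → Finset (Fin K)) (v : Fin M → Fin K → ℝ) (i : Fin K) : ℝ :=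
  (1 / (Mi S i : ℝ)) * ∑ m ∈ Finset.univ.filter (fun m => i ∈ S m), v m i

/-- Arm `i` is the (unique) best arm of client `m` under instance `v`. -/
def isBest (S : Fin M → Finset (Fin K)) (v : Fin M → Fin K → ℝ) (m : Fin M) (i : Fin K) :
    Prop :=
  i ∈ S m ∧ ∀ j ∈ S m, j ≠ i → armMean S v j < armMean S v i

/-- The set `P` of problem instances having a unique best arm at each client. -/
def PSet (S : Fin M → Finset (Fin K)) : Set (Fin M → Fin K → ℝ) :=
  {v | ∀ m, ∃ i, isBest S v m i}

/-- The set of alternative instances `Alt(v)`: instances in `P` whose tuple of best arms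
differs from that of `v`. -/
def AltSet (S : Fin M → Finset (Fin K)) (v : Fin M → Fin K → ℝ) :
    Set (Fin M → Fin K → ℝ) :=
  {v' | v' ∈ PSet S ∧ ¬ ∀ (m : Fin M) (i : Fin K), isBest S v m i ↔ isBest S v' m i}

/-- The set `Γ` of allocations: families `(ω_{i,m})_{m, i ∈ S_m}` of nonnegative weights
summing to one for each client (represented as functions vanishing off the support). -/
def Gam (S : Fin M → Finset (Fin K)) : Set (Fin M → Fin K → ℝ) :=
  {ω | (∀ m, ∀ i ∈ S m, 0 ≤ ω m i) ∧ (∀ m, ∑ i ∈ S m, ω m i = 1) ∧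
    ∀ m, ∀ i, i ∉ S m → ω m i = 0}

/-- `g_v(ω)`, the inner infimum over alternative instances. -/
def gfun (S : Fin M → Finset (Fin K)) (v ω : Fin M → Fin K → ℝ) : ℝ :=
  sInf {x | ∃ v' ∈ AltSet S v,
    x = ∑ m : Fin M, ∑ i ∈ S m, ω m i * (v m i - v' m i) ^ 2 / 2}

/-- The gap `Δ_i(v)`. -/
def Delta (S : Fin M → Finset (Fin K)) (v : Fin M → Fin K → ℝ) (i : Fin K) : ℝ :=
  sInf {x | ∃ m : Fin M, i ∈ S m ∧
    x = |armMean S v i - sSup {y | ∃ j ∈ S m, j ≠ i ∧ y = armMean S v j}|}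

/-- The denominator `(1/M_i²) ∑_{m : i ∈ S_m} 1/ω_{i,m}`. -/
def armDenom (S : Fin M → Finset (Fin K)) (ω : Fin M → Fin K → ℝ) (i : Fin K) : ℝ :=
  (1 / (Mi S i : ℝ) ^ 2) * ∑ m ∈ Finset.univ.filter (fun m => i ∈ S m), 1 / ω m i

/-- The simplified objective `g̃_v(ω)`. -/
def gtilde (S : Fin M → Finset (Fin K)) (v ω : Fin M → Fin K → ℝ) : ℝ :=
  if ∃ m, ∃ i ∈ S m, ω m i = 0 then 0
  else sInf {x | ∃ i : Fin K, x = (Delta S v i) ^ 2 / 2 / armDenom S ω i}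

/-- The relation `R` on arms: two arms are related if some client has access to both. -/
def armRel (S : Fin M → Finset (Fin K)) (i₁ i₂ : Fin K) : Prop :=
  ∃ m, i₁ ∈ S m ∧ i₂ ∈ S m

/-- The equivalence class `Q` of arm `i` under the smallest equivalence relation
containing `R`. -/
def armClass (S : Fin M → Finset (Fin K)) (i : Fin K) : Set (Fin K) :=
  {i' | Relation.EqvGen (armRel S) i i'}

/-- Same equivalence class, as a `Finset`. -/
def classFinset (S : Fin M → Finset (Fin K)) (i : Fin K) : Finset (Fin K) :=
  Finset.univ.filter fun i' => Relation.EqvGen (armRel S) i i'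

/-- The per-class objective `g̃_v^{(j)}(ω)` where `Q` is the `j`-th equivalence class. -/
def gtildeC (S : Fin M → Finset (Fin K)) (v : Fin M → Fin K → ℝ) (Q : Set (Fin K))
    (ω : Fin M → Fin K → ℝ) : ℝ :=
  if ∃ m, ∃ i ∈ S m, i ∈ Q ∧ ω m i = 0 then 0
  else sInf {x | ∃ i ∈ Q, x = (Delta S v i) ^ 2 / armDenom S ω i}

/-- `ω` is a common solution: it simultaneously attains `max_{ω'∈Γ} g̃_v(ω')` and
`max_{ω'∈Γ} g̃_v^{(j)}(ω')` for every equivalence class `Q_j`. -/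
def IsCommonSol (S : Fin M → Finset (Fin K)) (v ω : Fin M → Fin K → ℝ) : Prop :=
  ω ∈ Gam S ∧ (∀ ω' ∈ Gam S, gtilde S v ω' ≤ gtilde S v ω) ∧
    ∀ i : Fin K, ∀ ω' ∈ Gam S,
      gtildeC S v (armClass S i) ω' ≤ gtildeC S v (armClass S i) ω

/-- The balanced condition. -/
def BalancedCond (S : Fin M → Finset (Fin K)) (ω : Fin M → Fin K → ℝ) : Prop :=
  ∀ m₁ m₂ : Fin M, ∀ i₁ i₂ : Fin K, i₁ ∈ S m₁ → i₂ ∈ S m₁ → i₁ ∈ S m₂ → i₂ ∈ S m₂ →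
    ω m₁ i₁ / ω m₁ i₂ = ω m₂ i₁ / ω m₂ i₂

/-- The pseudo-balanced condition for instance `v`. -/
def PseudoBalancedCond (S : Fin M → Finset (Fin K)) (v ω : Fin M → Fin K → ℝ) : Prop :=
  ∀ i₁ i₂ : Fin K, Relation.EqvGen (armRel S) i₁ i₂ →
    (Delta S v i₁) ^ 2 / armDenom S ω i₁ = (Delta S v i₂) ^ 2 / armDenom S ω i₂

/-- The matrix `H(v)` (restricted to a class it gives `H^{(j)}(v)`). -/
def Hmat (S : Fin M → Finset (Fin K)) (v : Fin M → Fin K → ℝ) (i₁ i₂ : Fin K) : ℝ :=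
  (1 / ((Delta S v i₁) ^ 2 * (Mi S i₁ : ℝ) ^ 2)) *
    ((Finset.univ.filter fun m => i₁ ∈ S m ∧ i₂ ∈ S m).card : ℝ)

section AuxProof

variable (S : Fin M → Finset (Fin K)) (v : Fin M → Fin K → ℝ)

lemma gam_nonneg {ω : Fin M → Fin K → ℝ} (hω : ω ∈ Gam S) (m : Fin M) (i : Fin K) :
    0 ≤ ω m i := by
  by_cases h : i ∈ S m
  · exact hω.1 m i h
  · rw [hω.2.2 m i h]

lemma gam_le_one {ω : Fin M → Fin K → ℝ} (hω : ω ∈ Gam S) (m : Fin M) {i : Fin K}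
    (hi : i ∈ S m) : ω m i ≤ 1 := by
  have h := Finset.single_le_sum (f := fun j => ω m j) (fun j hj => hω.1 m j hj) hi
  rw [hω.2.1 m] at h
  exact h

lemma Mi_pos (hcov : ∀ i : Fin K, ∃ m, i ∈ S m) (i : Fin K) : 0 < Mi S i := by
  obtain ⟨m, hm⟩ := hcov i
  exact Finset.card_pos.mpr ⟨m, Finset.mem_filter.mpr ⟨Finset.mem_univ m, hm⟩⟩

lemma Mi_cast_pos (hcov : ∀ i : Fin K, ∃ m, i ∈ S m) (i : Fin K) : (0:ℝ) < (Mi S i : ℝ) := by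
  exact_mod_cast Mi_pos S hcov i

lemma armDenom_nonneg {ω : Fin M → Fin K → ℝ} (hω : ω ∈ Gam S) (i : Fin K) :
    0 ≤ armDenom S ω i := by
  unfold armDenom
  refine mul_nonneg (by positivity) (Finset.sum_nonneg fun m _ => ?_)
  exact one_div_nonneg.mpr (gam_nonneg S hω m i)

lemma armDenom_pos (hcov : ∀ i : Fin K, ∃ m, i ∈ S m) {ω : Fin M → Fin K → ℝ}
    (hω : ω ∈ Gam S) (i : Fin K) (h : ∀ m, i ∈ S m → ω m i ≠ 0) :
    0 < armDenom S ω i := by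
  unfold armDenom
  have hM := Mi_cast_pos S hcov i
  refine mul_pos (by positivity) (Finset.sum_pos (fun m hm => ?_) ?_)
  · rw [Finset.mem_filter] at hm
    have h0 : 0 < ω m i := lt_of_le_of_ne (gam_nonneg S hω m i) (Ne.symm (h m hm.2))
    positivity
  · obtain ⟨m, hm⟩ := hcov i
    exact ⟨m, Finset.mem_filter.mpr ⟨Finset.mem_univ m, hm⟩⟩

lemma gtildeC_nonneg (Q : Set (Fin K)) {ω : Fin M → Fin K → ℝ} (hω : ω ∈ Gam S) :
    0 ≤ gtildeC S v Q ω := by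
  unfold gtildeC
  split_ifs
  · exact le_refl 0
  · refine Real.sInf_nonneg fun x hx => ?_
    obtain ⟨i, hi, rfl⟩ := hx
    exact div_nonneg (sq_nonneg _) (armDenom_nonneg S hω i)

lemma setC_bddBelow (Q : Set (Fin K)) (ω : Fin M → Fin K → ℝ)
    (hω : ω ∈ Gam S) :
    BddBelow {x | ∃ i ∈ Q, x = Delta S v i ^ 2 / armDenom S ω i} := by
  refine ⟨0, fun x hx => ?_⟩
  obtain ⟨i, hi, rfl⟩ := hx
  exact div_nonneg (sq_nonneg _) (armDenom_nonneg S hω i)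

lemma gtildeC_le_bound (hcov : ∀ i : Fin K, ∃ m, i ∈ S m) (Q : Set (Fin K))
    {ω : Fin M → Fin K → ℝ} (hω : ω ∈ Gam S) {m : Fin M} {i : Fin K}
    (hi : i ∈ S m) (hiQ : i ∈ Q) :
    gtildeC S v Q ω ≤ Delta S v i ^ 2 * (Mi S i : ℝ) ^ 2 * ω m i := by
  unfold gtildeC
  split_ifs with h
  · exact mul_nonneg (mul_nonneg (sq_nonneg _) (sq_nonneg _)) (gam_nonneg S hω m i)
  · push_neg at h
    have hwpos : ∀ m', i ∈ S m' → 0 < ω m' i := fun m' hm' =>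
      lt_of_le_of_ne (gam_nonneg S hω m' i) (Ne.symm (h m' i hm' hiQ))
    have hd : 0 < armDenom S ω i :=
      armDenom_pos S hcov hω i (fun m' hm' => (hwpos m' hm').ne')
    have hM := Mi_cast_pos S hcov i
    have hw := hwpos m hi
    have hstep : sInf {x | ∃ i ∈ Q, x = Delta S v i ^ 2 / armDenom S ω i}
        ≤ Delta S v i ^ 2 / armDenom S ω i :=
      csInf_le (setC_bddBelow S v Q ω hω) ⟨i, hiQ, rfl⟩
    have hkey : 1 / (Mi S i : ℝ) ^ 2 * (1 / ω m i) ≤ armDenom S ω i := by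
      unfold armDenom
      refine mul_le_mul_of_nonneg_left ?_ (by positivity)
      refine Finset.single_le_sum (f := fun m' => 1 / ω m' i) (fun m' hm' => ?_)
        (Finset.mem_filter.mpr ⟨Finset.mem_univ m, hi⟩)
      rw [Finset.mem_filter] at hm'
      exact one_div_nonneg.mpr (hwpos m' hm'.2).le
    have h2 : Delta S v i ^ 2 / armDenom S ω i
        ≤ Delta S v i ^ 2 / (1 / (Mi S i : ℝ) ^ 2 * (1 / ω m i)) :=
      div_le_div_of_nonneg_left (sq_nonneg _) (by positivity) hkey
    have h3 : Delta S v i ^ 2 / (1 / (Mi S i : ℝ) ^ 2 * (1 / ω m i))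
        = Delta S v i ^ 2 * (Mi S i : ℝ) ^ 2 * ω m i := by
      field_simp
    linarith

lemma uniform_mem_Gam (hS : ∀ m, 2 ≤ (S m).card) :
    (fun m i => if i ∈ S m then ((S m).card : ℝ)⁻¹ else 0) ∈ Gam S := by
  refine ⟨fun m i hi => ?_, fun m => ?_, fun m i hi => by simp [hi]⟩
  · simp only [hi, if_true]
    positivity
  · have hcard : ((S m).card : ℝ) ≠ 0 := by
      have := hS m; positivity
    rw [Finset.sum_congr rfl (fun i hi => if_pos hi), Finset.sum_const, nsmul_eq_mul]
    field_simp

lemma contOn_inf' {α : Type*} [TopologicalSpace α] {s : Set α} (t : Finset (Fin K)) :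
    ∀ (ht : t.Nonempty) (f : Fin K → α → ℝ), (∀ i ∈ t, ContinuousOn (f i) s) →
    ContinuousOn (fun x => t.inf' ht fun i => f i x) s := by
  induction t using Finset.cons_induction with
  | empty => intro ht; exact absurd ht (by simp)
  | cons a t ha ih =>
    intro ht f hf
    rcases t.eq_empty_or_nonempty with rfl | ht'
    · simpa using hf a (by simp)
    · have heq : (fun x => (Finset.cons a t ha).inf' ht fun i => f i x)
          = fun x => (f a x) ⊓ (t.inf' ht' fun i => f i x) := by
        funext x
        exact Finset.inf'_cons ht' (fun i => f i x)
      rw [heq]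
      exact ContinuousOn.inf (hf a (by simp))
        (ih ht' f (fun i hi => hf i (by simp [hi])))

lemma eval_continuous (m : Fin M) (i : Fin K) :
    Continuous fun ω : Fin M → Fin K → ℝ => ω m i :=
  (continuous_apply i).comp (continuous_apply m)

lemma isClosed_Gam : IsClosed (Gam S) := by
  have h : Gam S = (⋂ m, ⋂ i, {ω : Fin M → Fin K → ℝ | i ∈ S m → 0 ≤ ω m i}) ∩
      ((⋂ m, {ω : Fin M → Fin K → ℝ | ∑ i ∈ S m, ω m i = 1}) ∩
       (⋂ m, ⋂ i, {ω : Fin M → Fin K → ℝ | i ∉ S m → ω m i = 0})) := by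
    ext ω
    simp only [Gam, Set.mem_inter_iff, Set.mem_iInter, Set.mem_setOf_eq]
  rw [h]
  refine IsClosed.inter ?_ (IsClosed.inter ?_ ?_)
  · refine isClosed_iInter fun m => isClosed_iInter fun i => ?_
    by_cases hmem : i ∈ S m
    · have : {ω : Fin M → Fin K → ℝ | i ∈ S m → 0 ≤ ω m i}
          = {ω : Fin M → Fin K → ℝ | 0 ≤ ω m i} := by simp [hmem]
      rw [this]
      exact isClosed_le continuous_const (eval_continuous m i)
    · have : {ω : Fin M → Fin K → ℝ | i ∈ S m → 0 ≤ ω m i} = Set.univ := by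
        simp [hmem]
      rw [this]; exact isClosed_univ
  · refine isClosed_iInter fun m => ?_
    exact isClosed_eq (continuous_finset_sum _ fun i _ => eval_continuous m i)
      continuous_const
  · refine isClosed_iInter fun m => isClosed_iInter fun i => ?_
    by_cases hmem : i ∈ S m
    · have : {ω : Fin M → Fin K → ℝ | i ∉ S m → ω m i = 0} = Set.univ := by simp [hmem]
      rw [this]; exact isClosed_univ
    · have : {ω : Fin M → Fin K → ℝ | i ∉ S m → ω m i = 0}
          = {ω : Fin M → Fin K → ℝ | ω m i = 0} := by simp [hmem]
      rw [this]
      exact isClosed_eq (eval_continuous m i) continuous_const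

lemma gam_subset_box : Gam S ⊆
    Set.pi Set.univ (fun _ : Fin M => Set.pi Set.univ fun _ : Fin K => Set.Icc (0:ℝ) 1) := by
  intro ω hω
  rw [Set.mem_univ_pi]
  intro m
  rw [Set.mem_univ_pi]
  intro i
  by_cases h : i ∈ S m
  · exact ⟨gam_nonneg S hω m i, gam_le_one S hω m h⟩
  · rw [hω.2.2 m i h]; exact ⟨le_refl 0, zero_le_one⟩

lemma isCompact_box : IsCompact
    (Set.pi Set.univ (fun _ : Fin M => Set.pi Set.univ fun _ : Fin K => Set.Icc (0:ℝ) 1)) :=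
  isCompact_univ_pi fun _ => isCompact_univ_pi fun _ => isCompact_Icc

lemma exists_max (hS : ∀ m, 2 ≤ (S m).card) (hcov : ∀ i : Fin K, ∃ m, i ∈ S m)
    (Q : Set (Fin K)) (i₀ : Fin K) (hi₀ : i₀ ∈ Q) :
    ∃ ω ∈ Gam S, ∀ ω' ∈ Gam S, gtildeC S v Q ω' ≤ gtildeC S v Q ω := by
  classical
  set bnd : Fin K → ℝ := fun i => Delta S v i ^ 2 * (Mi S i : ℝ) ^ 2 with hbnd
  set B : ℝ := (∑ i : Fin K, bnd i) + 1 with hBdef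
  have hbnd_nonneg : ∀ i, 0 ≤ bnd i := fun i => mul_nonneg (sq_nonneg _) (sq_nonneg _)
  have hbndB : ∀ i : Fin K, bnd i ≤ B := by
    intro i
    have h1 : bnd i ≤ ∑ j : Fin K, bnd j :=
      Finset.single_le_sum (fun j _ => hbnd_nonneg j) (Finset.mem_univ i)
    simp only [hBdef]; linarith
  have hBpos : 0 < B := by
    have : 0 ≤ ∑ i : Fin K, bnd i := Finset.sum_nonneg fun i _ => hbnd_nonneg i
    simp only [hBdef]; linarith
  obtain ⟨m₀, hm₀⟩ := hcov i₀
  have hω₀ : (fun m i => if i ∈ S m then ((S m).card : ℝ)⁻¹ else 0) ∈ Gam S :=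
    uniform_mem_Gam S hS
  set ω₀ : Fin M → Fin K → ℝ := fun m i => if i ∈ S m then ((S m).card : ℝ)⁻¹ else 0
  have himg_ne : (gtildeC S v Q '' Gam S).Nonempty := ⟨_, ω₀, hω₀, rfl⟩
  have hub : ∀ ω ∈ Gam S, gtildeC S v Q ω ≤ B := by
    intro ω hω
    calc gtildeC S v Q ω ≤ bnd i₀ * ω m₀ i₀ := gtildeC_le_bound S v hcov Q hω hm₀ hi₀
      _ ≤ bnd i₀ * 1 := mul_le_mul_of_nonneg_left (gam_le_one S hω m₀ hm₀) (hbnd_nonneg i₀)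
      _ ≤ B := by rw [mul_one]; exact hbndB i₀
  have himg_bdd : BddAbove (gtildeC S v Q '' Gam S) := by
    refine ⟨B, ?_⟩
    rintro x ⟨ω, hω, rfl⟩
    exact hub ω hω
  set c : ℝ := sSup (gtildeC S v Q '' Gam S) with hcdef
  have hle_c : ∀ ω ∈ Gam S, gtildeC S v Q ω ≤ c := fun ω h => le_csSup himg_bdd ⟨ω, h, rfl⟩
  have hc0 : 0 ≤ c := le_trans (gtildeC_nonneg S v Q hω₀) (hle_c ω₀ hω₀)
  rcases eq_or_lt_of_le hc0 with hc | hc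
  · exact ⟨ω₀, hω₀, fun ω' h' => le_trans (hle_c ω' h')
      (hc ▸ gtildeC_nonneg S v Q hω₀)⟩
  · set δ : ℝ := c / (2 * B) with hδdef
    have hδ : 0 < δ := by positivity
    obtain ⟨x, ⟨ω₁, hω₁, rfl⟩, hx⟩ := exists_lt_of_lt_csSup himg_ne
      (show c / 2 < c by linarith)
    have hbig : ∀ ω ∈ Gam S, c / 2 < gtildeC S v Q ω →
        ∀ m, ∀ i ∈ S m, i ∈ Q → δ ≤ ω m i := by
      intro ω hω hgt m i hi hiQ
      have h1 := gtildeC_le_bound S v hcov Q hω hi hiQ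
      have h2 : bnd i * ω m i ≤ B * ω m i :=
        mul_le_mul_of_nonneg_right (hbndB i) (gam_nonneg S hω m i)
      have h3 : c / 2 < B * ω m i := by
        calc c / 2 < gtildeC S v Q ω := hgt
          _ ≤ bnd i * ω m i := h1
          _ ≤ B * ω m i := h2
      rw [hδdef, div_le_iff₀ (by positivity)]
      nlinarith
    set A : Set (Fin M → Fin K → ℝ) :=
      Gam S ∩ ⋂ m, ⋂ i, {ω | i ∈ S m ∧ i ∈ Q → δ ≤ ω m i} with hAdef
    have hA_delta : ∀ ω ∈ A, ∀ m, ∀ i, i ∈ S m → i ∈ Q → δ ≤ ω m i := by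
      intro ω hω m i hi hiQ
      have := hω.2
      simp only [Set.mem_iInter, Set.mem_setOf_eq] at this
      exact this m i ⟨hi, hiQ⟩
    have hA1 : ω₁ ∈ A := by
      refine ⟨hω₁, ?_⟩
      simp only [Set.mem_iInter, Set.mem_setOf_eq]
      exact fun m i hmi => hbig ω₁ hω₁ hx m i hmi.1 hmi.2
    have hAclosed : IsClosed A := by
      refine IsClosed.inter (isClosed_Gam S) ?_
      refine isClosed_iInter fun m => isClosed_iInter fun i => ?_
      by_cases hmem : i ∈ S m ∧ i ∈ Q
      · have : {ω : Fin M → Fin K → ℝ | i ∈ S m ∧ i ∈ Q → δ ≤ ω m i}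
            = {ω : Fin M → Fin K → ℝ | δ ≤ ω m i} := by simp [hmem]
        rw [this]
        exact isClosed_le continuous_const (eval_continuous m i)
      · have : {ω : Fin M → Fin K → ℝ | i ∈ S m ∧ i ∈ Q → δ ≤ ω m i} = Set.univ := by
          simp only [Set.eq_univ_iff_forall, Set.mem_setOf_eq]
          exact fun ω h => absurd h hmem
        rw [this]; exact isClosed_univ
    have hAcomp : IsCompact A :=
      (isCompact_box (K := K) (M := M)).of_isClosed_subset hAclosed
        (fun ω hω => gam_subset_box S hω.1)
    -- rewrite gtildeC as a finite inf' on A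
    have hQfin : Q.Finite := Set.toFinite Q
    set Qf : Finset (Fin K) := hQfin.toFinset with hQfdef
    have hQfne : Qf.Nonempty := ⟨i₀, hQfin.mem_toFinset.mpr hi₀⟩
    have hAzero : ∀ ω ∈ A, ¬ ∃ m, ∃ i ∈ S m, i ∈ Q ∧ ω m i = 0 := by
      rintro ω hω ⟨m, i, hi, hiQ, h0⟩
      have := hA_delta ω hω m i hi hiQ
      rw [h0] at this
      linarith
    have heqOn : ∀ ω ∈ A, gtildeC S v Q ω
        = Qf.inf' hQfne fun i => Delta S v i ^ 2 / armDenom S ω i := by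
      intro ω hω
      unfold gtildeC
      rw [if_neg (hAzero ω hω)]
      rw [Finset.inf'_eq_csInf_image]
      congr 1
      ext x
      simp only [Set.mem_setOf_eq, Set.mem_image, Finset.mem_coe, hQfdef,
        hQfin.mem_toFinset]
      constructor
      · rintro ⟨i, hi, rfl⟩; exact ⟨i, hi, rfl⟩
      · rintro ⟨i, hi, rfl⟩; exact ⟨i, hi, rfl⟩
    have hcont : ContinuousOn (gtildeC S v Q) A := by
      have hcont' : ContinuousOn
          (fun ω => Qf.inf' hQfne fun i => Delta S v i ^ 2 / armDenom S ω i) A := by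
        refine contOn_inf' Qf hQfne _ fun i hi => ?_
        have hiQ : i ∈ Q := hQfin.mem_toFinset.mp hi
        have hdenom_cont : ContinuousOn (fun ω => armDenom S ω i) A := by
          unfold armDenom
          refine ContinuousOn.mul continuousOn_const ?_
          refine continuousOn_finset_sum _ fun m hm => ?_
          rw [Finset.mem_filter] at hm
          refine ContinuousOn.div continuousOn_const
            ((eval_continuous m i).continuousOn) fun ω hω => ?_
          have := hA_delta ω hω m i hm.2 hiQ
          linarith
        refine ContinuousOn.div continuousOn_const hdenom_cont fun ω hω => ?_
        refine (armDenom_pos S hcov hω.1 i fun m hm => ?_).ne'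
        have := hA_delta ω hω m i hm hiQ
        intro h0; rw [h0] at this; linarith
      exact ContinuousOn.congr hcont' heqOn
    obtain ⟨ωs, hωsA, hmaxOn⟩ := hAcomp.exists_isMaxOn ⟨ω₁, hA1⟩ hcont
    have hmax : ∀ ω ∈ A, gtildeC S v Q ω ≤ gtildeC S v Q ωs := fun ω hω => hmaxOn hω
    refine ⟨ωs, hωsA.1, fun ω' hω' => ?_⟩
    by_cases hA' : ω' ∈ A
    · exact hmax ω' hA'
    · have hsmall : ∃ m, ∃ i, i ∈ S m ∧ i ∈ Q ∧ ω' m i < δ := by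
        by_contra hcon
        push_neg at hcon
        refine hA' ⟨hω', ?_⟩
        simp only [Set.mem_iInter, Set.mem_setOf_eq]
        exact fun m i hmi => hcon m i hmi.1 hmi.2
      obtain ⟨m, i, hi, hiQ, hlt⟩ := hsmall
      have h1 : gtildeC S v Q ω' ≤ bnd i * ω' m i := gtildeC_le_bound S v hcov Q hω' hi hiQ
      have h2 : bnd i * ω' m i ≤ B * ω' m i :=
        mul_le_mul_of_nonneg_right (hbndB i) (gam_nonneg S hω' m i)
      have h3 : B * ω' m i < B * δ := mul_lt_mul_of_pos_left hlt hBpos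
      have h4 : B * δ = c / 2 := by
        rw [hδdef]; field_simp
      have h5 : c / 2 < gtildeC S v Q ωs := lt_of_lt_of_le hx (hmax ω₁ hA1)
      exact le_of_lt (lt_trans (lt_of_le_of_lt (h1.trans h2) (h4 ▸ h3)) h5)

lemma armClass_eq {i j : Fin K} (h : Relation.EqvGen (armRel S) i j) :
    armClass S i = armClass S j := by
  ext k
  simp only [armClass, Set.mem_setOf_eq]
  exact ⟨fun hk => Relation.EqvGen.trans _ _ _ (Relation.EqvGen.symm _ _ h) hk,
    fun hk => Relation.EqvGen.trans _ _ _ h hk⟩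

lemma classFinset_eq {i j : Fin K} (h : Relation.EqvGen (armRel S) i j) :
    classFinset S i = classFinset S j := by
  ext k
  simp only [classFinset, Finset.mem_filter, Finset.mem_univ, true_and]
  exact ⟨fun hk => Relation.EqvGen.trans _ _ _ (Relation.EqvGen.symm _ _ h) hk,
    fun hk => Relation.EqvGen.trans _ _ _ h hk⟩

lemma classFinset_nonempty (i : Fin K) : (classFinset S i).Nonempty :=
  ⟨i, Finset.mem_filter.mpr ⟨Finset.mem_univ i, Relation.EqvGen.refl i⟩⟩

/-- Canonical representative of the equivalence class of an arm. -/
def rep (i : Fin K) : Fin K := (classFinset S i).min' (classFinset_nonempty S i)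

lemma min'_congr {s t : Finset (Fin K)} (hs : s.Nonempty) (ht : t.Nonempty) (h : s = t) :
    s.min' hs = t.min' ht := by
  subst h; rfl

lemma rep_spec (i : Fin K) : Relation.EqvGen (armRel S) i (rep S i) := by
  have h := Finset.min'_mem (classFinset S i) (classFinset_nonempty S i)
  simp only [classFinset, Finset.mem_filter] at h
  exact h.2

lemma rep_eq {i j : Fin K} (h : Relation.EqvGen (armRel S) i j) : rep S i = rep S j :=
  min'_congr _ _ (classFinset_eq S h)

lemma gtildeC_congr (Q : Set (Fin K)) {ω₁ ω₂ : Fin M → Fin K → ℝ}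
    (h : ∀ m i, i ∈ S m → i ∈ Q → ω₁ m i = ω₂ m i) :
    gtildeC S v Q ω₁ = gtildeC S v Q ω₂ := by
  have hd : ∀ i ∈ Q, armDenom S ω₁ i = armDenom S ω₂ i := by
    intro i hiQ
    unfold armDenom
    congr 1
    refine Finset.sum_congr rfl fun m hm => ?_
    rw [Finset.mem_filter] at hm
    rw [h m i hm.2 hiQ]
  have hc : (∃ m, ∃ i ∈ S m, i ∈ Q ∧ ω₁ m i = 0) ↔ (∃ m, ∃ i ∈ S m, i ∈ Q ∧ ω₂ m i = 0) := by
    constructor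
    · rintro ⟨m, i, hi, hiQ, h0⟩
      exact ⟨m, i, hi, hiQ, by rw [← h m i hi hiQ]; exact h0⟩
    · rintro ⟨m, i, hi, hiQ, h0⟩
      exact ⟨m, i, hi, hiQ, by rw [h m i hi hiQ]; exact h0⟩
  unfold gtildeC
  by_cases h1 : ∃ m, ∃ i ∈ S m, i ∈ Q ∧ ω₁ m i = 0
  · rw [if_pos h1, if_pos (hc.mp h1)]
  · rw [if_neg h1, if_neg (fun h2 => h1 (hc.mpr h2))]
    congr 1
    ext x
    simp only [Set.mem_setOf_eq]
    constructor
    · rintro ⟨i, hi, rfl⟩; exact ⟨i, hi, by rw [hd i hi]⟩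
    · rintro ⟨i, hi, rfl⟩; exact ⟨i, hi, by rw [hd i hi]⟩

lemma gtilde_le_half (hK : 2 ≤ K) {ω' : Fin M → Fin K → ℝ} (hω' : ω' ∈ Gam S) (i₀ : Fin K) :
    gtilde S v ω' ≤ gtildeC S v (armClass S i₀) ω' / 2 := by
  unfold gtilde
  split_ifs with hz
  · have := gtildeC_nonneg S v (armClass S i₀) hω'
    linarith
  · push_neg at hz
    have hz' : ¬ ∃ m, ∃ i ∈ S m, i ∈ armClass S i₀ ∧ ω' m i = 0 := by
      rintro ⟨m, i, hi, _, h0⟩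
      exact hz m i hi h0
    have hfin : {x | ∃ i ∈ armClass S i₀, x = Delta S v i ^ 2 / armDenom S ω' i}.Finite := by
      refine (Set.finite_range fun i => Delta S v i ^ 2 / armDenom S ω' i).subset ?_
      rintro x ⟨i, hi, rfl⟩
      exact ⟨i, rfl⟩
    have hne : {x | ∃ i ∈ armClass S i₀, x = Delta S v i ^ 2 / armDenom S ω' i}.Nonempty :=
      ⟨_, i₀, Relation.EqvGen.refl i₀, rfl⟩
    obtain ⟨i₁, hi₁Q, heq⟩ := hne.csInf_mem hfin
    have hbdd : BddBelow {x : ℝ | ∃ i : Fin K, x = Delta S v i ^ 2 / 2 / armDenom S ω' i} := by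
      refine (Set.finite_range fun i => Delta S v i ^ 2 / 2 / armDenom S ω' i).subset ?_
        |>.bddBelow
      rintro x ⟨i, rfl⟩
      exact ⟨i, rfl⟩
    calc sInf {x : ℝ | ∃ i : Fin K, x = Delta S v i ^ 2 / 2 / armDenom S ω' i}
        ≤ Delta S v i₁ ^ 2 / 2 / armDenom S ω' i₁ := csInf_le hbdd ⟨i₁, rfl⟩
      _ = (Delta S v i₁ ^ 2 / armDenom S ω' i₁) / 2 := by ring
      _ = gtildeC S v (armClass S i₀) ω' / 2 := by
          unfold gtildeC
          rw [if_neg hz', ← heq]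

lemma half_le_gtilde (hK : 2 ≤ K) {ω : Fin M → Fin K → ℝ} (hω : ω ∈ Gam S) :
    ∃ i₀ : Fin K, gtildeC S v (armClass S i₀) ω / 2 ≤ gtilde S v ω := by
  have : NeZero K := ⟨by omega⟩
  unfold gtilde
  split_ifs with hz
  · obtain ⟨m, i, hi, h0⟩ := hz
    refine ⟨i, ?_⟩
    have h1 : gtildeC S v (armClass S i) ω = 0 := by
      unfold gtildeC
      rw [if_pos ⟨m, i, hi, Relation.EqvGen.refl i, h0⟩]
    rw [h1]
    norm_num
  · push_neg at hz
    have hfin : {x : ℝ | ∃ i : Fin K, x = Delta S v i ^ 2 / 2 / armDenom S ω i}.Finite := by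
      refine (Set.finite_range fun i => Delta S v i ^ 2 / 2 / armDenom S ω i).subset ?_
      rintro x ⟨i, rfl⟩
      exact ⟨i, rfl⟩
    have hne : {x : ℝ | ∃ i : Fin K, x = Delta S v i ^ 2 / 2 / armDenom S ω i}.Nonempty :=
      ⟨_, (0 : Fin K), rfl⟩
    obtain ⟨is, heq⟩ := hne.csInf_mem hfin
    refine ⟨is, ?_⟩
    have hz' : ¬ ∃ m, ∃ i ∈ S m, i ∈ armClass S is ∧ ω m i = 0 := by
      rintro ⟨m, i, hi, _, h0⟩
      exact hz m i hi h0
    have h1 : gtildeC S v (armClass S is) ω ≤ Delta S v is ^ 2 / armDenom S ω is := by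
      unfold gtildeC
      rw [if_neg hz']
      exact csInf_le (setC_bddBelow S v (armClass S is) ω hω)
        ⟨is, Relation.EqvGen.refl is, rfl⟩
    rw [heq]
    calc gtildeC S v (armClass S is) ω / 2 ≤ (Delta S v is ^ 2 / armDenom S ω is) / 2 := by
          linarith
      _ = Delta S v is ^ 2 / 2 / armDenom S ω is := by ring

end AuxProof

/-- Equation (32): existence of a common solution to `max g̃_v` and all the `max g̃_v^(j)`. -/
theorem stmt5 (K M : ℕ) (hK : 2 ≤ K) (hM : 1 ≤ M) (S : Fin M → Finset (Fin K))
    (hS : ∀ m, 2 ≤ (S m).card) (hcov : ∀ i : Fin K, ∃ m, i ∈ S m)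
    (v : Fin M → Fin K → ℝ) (hv : v ∈ PSet S) :
    ∃ ω : Fin M → Fin K → ℝ, IsCommonSol S v ω := by
  classical
  have hmaxC : ∀ r : Fin K, ∃ ωr ∈ Gam S, ∀ ω' ∈ Gam S,
      gtildeC S v (armClass S r) ω' ≤ gtildeC S v (armClass S r) ωr :=
    fun r => exists_max S v hS hcov (armClass S r) r (Relation.EqvGen.refl r)
  choose F hF1 hF2 using hmaxC
  have hSne : ∀ m, (S m).Nonempty := fun m => Finset.card_pos.mp (by have := hS m; omega)
  set pick : Fin M → Fin K := fun m => (S m).min' (hSne m) with hpick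
  have hpickmem : ∀ m, pick m ∈ S m := fun m => (S m).min'_mem (hSne m)
  set ω : Fin M → Fin K → ℝ := fun m => F (rep S (pick m)) m with hωdef
  have hωGam : ω ∈ Gam S := ⟨fun m i hi => (hF1 _).1 m i hi,
    fun m => (hF1 _).2.1 m, fun m i hi => (hF1 _).2.2 m i hi⟩
  have hCmax : ∀ i₀ : Fin K, ∀ ω' ∈ Gam S,
      gtildeC S v (armClass S i₀) ω' ≤ gtildeC S v (armClass S i₀) ω := by
    intro i₀ ω' hω'
    have hagree : gtildeC S v (armClass S i₀) ω
        = gtildeC S v (armClass S i₀) (F (rep S i₀)) := by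
      refine gtildeC_congr S v _ fun m i hi hiQ => ?_
      have hiQ' : Relation.EqvGen (armRel S) i₀ i := hiQ
      have h1 : Relation.EqvGen (armRel S) i₀ (pick m) :=
        Relation.EqvGen.trans _ _ _ hiQ' (Relation.EqvGen.rel _ _ ⟨m, hi, hpickmem m⟩)
      have h2 : rep S (pick m) = rep S i₀ := (rep_eq S h1).symm
      simp only [hωdef, h2]
    rw [hagree]
    have hcls : armClass S (rep S i₀) = armClass S i₀ :=
      (armClass_eq S (rep_spec S i₀)).symm
    have h3 := hF2 (rep S i₀) ω' hω'
    rwa [hcls] at h3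
  refine ⟨ω, hωGam, ?_, fun i₀ ω' hω' => hCmax i₀ ω' hω'⟩
  intro ω' hω'
  obtain ⟨i₀, hge⟩ := half_le_gtilde S v hK hωGam
  have h1 := gtilde_le_half S v hK hω' i₀
  have h2 := hCmax i₀ ω' hω'
  linarith

end

end HetTS
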